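/- arXiv:1006.2462 — 6 statements merged into one kernel-verified Lean document; each statement's English description precedes it below -/
import Mathlib

section
/- For integers 1 ≤ l < r ≤ n, the sum over m ≤ -1 and m ≥ n+2 of 1/(|r-m|·|m-l|) is at most (1/(r-l))·(log((n+1-l)/(n+1-r)) + log(r/l)). -/
/-!
Substituting `m = -(k + 1)` and `m = n + 2 + k` turns the two tails into series
`∑ₖ 1 / ((a + 1 + k) * (b + 1 + k))` with `0 < a < b`, namely `(a, b) = (l, r)` and
`(a, b) = (n + 1 - r, n + 1 - l)`; in both cases `b - a = r - l`. By `log x ≥ 1 - 1 / x`, the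
`k`-th term is at most `(g k - g (k + 1)) / (b - a)` with `g k = log ((b + k) / (a + k))`, so the
partial sums telescope to at most `g 0 / (b - a) = log (b / a) / (b - a)`, as `g` is nonnegative.
-/

open Real Finset

lemma one_div_add_one_mul_add_one_le_log_sub {u v : ℝ} (hu : 0 < u) (huv : u < v) :
    1 / ((u + 1) * (v + 1)) ≤ (log (v / u) - log ((v + 1) / (u + 1))) / (v - u) := by
  have hv : 0 < v := hu.trans huv
  have hvu : 0 < v - u := sub_pos.2 huv
  have hx : 0 < v / u / ((v + 1) / (u + 1)) := by positivity
  calc 1 / ((u + 1) * (v + 1))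
      ≤ (1 - (v / u / ((v + 1) / (u + 1)))⁻¹) / (v - u) := by
        rw [le_div_iff₀ hvu]
        field_simp
        nlinarith
    _ ≤ log (v / u / ((v + 1) / (u + 1))) / (v - u) := by
        gcongr
        exact one_sub_inv_le_log_of_pos hx
    _ = (log (v / u) - log ((v + 1) / (u + 1))) / (v - u) := by
        rw [log_div (by positivity) (by positivity)]

lemma sum_range_one_div_add_mul_add_le {a b : ℝ} (ha : 0 < a) (hab : a < b) (N : ℕ) :
    ∑ k ∈ range N, 1 / ((a + 1 + k) * (b + 1 + k)) ≤ log (b / a) / (b - a) := by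
  set g : ℕ → ℝ := fun k ↦ log ((b + k) / (a + k))
  have hg_nonneg : 0 ≤ g N := log_nonneg <| (one_le_div (by positivity)).2 (by linarith)
  calc ∑ k ∈ range N, 1 / ((a + 1 + k) * (b + 1 + k))
      ≤ ∑ k ∈ range N, (g k - g (k + 1)) / (b - a) := by
        refine sum_le_sum fun k _ ↦ ?_
        have h := one_div_add_one_mul_add_one_le_log_sub (u := a + k) (v := b + k) (by positivity)
          (by linarith)
        simpa only [g, Nat.cast_succ, ← add_assoc, add_right_comm _ (1 : ℝ),
          add_sub_add_right_eq_sub] using h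
    _ = (g 0 - g N) / (b - a) := by rw [← sum_div, sum_range_sub']
    _ ≤ log (b / a) / (b - a) := by
        have : 0 < b - a := by linarith
        gcongr
        simp [g, hg_nonneg]

lemma summable_one_div_add_mul_add {a b : ℝ} (ha : 0 < a) (hab : a < b) :
    Summable fun k : ℕ ↦ 1 / ((a + 1 + k) * (b + 1 + k)) := by
  have hb := ha.trans hab
  exact summable_of_sum_range_le (fun _ ↦ by positivity) (sum_range_one_div_add_mul_add_le ha hab)

lemma tsum_one_div_add_mul_add_le {a b : ℝ} (ha : 0 < a) (hab : a < b) :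
    ∑' k : ℕ, 1 / ((a + 1 + k) * (b + 1 + k)) ≤ log (b / a) / (b - a) :=
  (summable_one_div_add_mul_add ha hab).tsum_le_of_sum_range_le
    (sum_range_one_div_add_mul_add_le ha hab)

def tailEquiv (n : ℕ) : ℕ ⊕ ℕ ≃ {m : ℤ // m ≤ -1 ∨ (n : ℤ) + 2 ≤ m} where
  toFun := Sum.elim (fun k ↦ ⟨-(k + 1), by omega⟩) (fun k ↦ ⟨n + 2 + k, by omega⟩)
  invFun m := if m.1 ≤ -1 then .inl (-(m.1 + 1)).toNat else .inr (m.1 - (n + 2)).toNat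
  left_inv := by rintro (k | k) <;> simp; omega
  right_inv := by
    rintro ⟨m, hm⟩
    by_cases h : m ≤ -1 <;> simp [h]; omega

lemma tsum_tail_eq {M : Type*} [AddCommMonoid M] [TopologicalSpace M] [ContinuousAdd M]
    [T2Space M] (n : ℕ) {f : ℤ → M} (h_left : Summable fun k : ℕ ↦ f (-(k + 1)))
    (h_right : Summable fun k : ℕ ↦ f (n + 2 + k)) :
    ∑' m : {m : ℤ // m ≤ -1 ∨ (n : ℤ) + 2 ≤ m}, f m =
      ∑' k : ℕ, f (-(k + 1)) + ∑' k : ℕ, f (n + 2 + k) := by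
  rw [← (tailEquiv n).tsum_eq]
  exact Summable.tsum_sum h_left h_right

theorem tail_sum_log_bound_general (n r l : ℕ)
    (hl : 1 ≤ l) (hlr : l < r) (hrn : r ≤ n) :
    (∑' m : {m : ℤ // m ≤ -1 ∨ (n : ℤ) + 2 ≤ m},
        1 / (|(r : ℝ) - (m.1 : ℝ)| * |(m.1 : ℝ) - (l : ℝ)|)) ≤
      (1 / ((r : ℝ) - l)) *
        (Real.log (((n : ℝ) + 1 - l) / ((n : ℝ) + 1 - r)) + Real.log ((r : ℝ) / l)) := by
  have hl' : (0 : ℝ) < l := by exact_mod_cast hl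
  have hlr' : (l : ℝ) < r := by exact_mod_cast hlr
  have hrn' : (r : ℝ) < n + 1 := by norm_cast; omega
  have hnr : (0 : ℝ) < n + 1 - r := by linarith
  have hnlr : (n : ℝ) + 1 - r < n + 1 - l := by linarith
  set f : ℤ → ℝ := fun m ↦ 1 / (|(r : ℝ) - m| * |(m : ℝ) - l|)
  have h_left : (fun k : ℕ ↦ f (-(k + 1))) =
      fun k : ℕ ↦ 1 / (((l : ℝ) + 1 + k) * ((r : ℝ) + 1 + k)) := by
    ext k
    simp only [f]
    push_cast
    rw [abs_of_pos (by linarith), abs_of_neg (by linarith)]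
    ring
  have h_right : (fun k : ℕ ↦ f (n + 2 + k)) =
      fun k : ℕ ↦ 1 / (((n : ℝ) + 1 - r + 1 + k) * ((n : ℝ) + 1 - l + 1 + k)) := by
    ext k
    simp only [f]
    push_cast
    rw [abs_of_neg (by linarith), abs_of_pos (by linarith)]
    ring
  have h_tail_right := tsum_one_div_add_mul_add_le hnr hnlr
  rw [sub_sub_sub_cancel_left] at h_tail_right
  calc _ = ∑' k : ℕ, f (-(k + 1)) + ∑' k : ℕ, f (n + 2 + k) :=
        tsum_tail_eq n (h_left ▸ summable_one_div_add_mul_add hl' hlr')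
          (h_right ▸ summable_one_div_add_mul_add hnr hnlr)
    _ ≤ log (r / l) / (r - l) + log ((n + 1 - l) / (n + 1 - r)) / (r - l) := by
        rw [h_left, h_right]
        exact add_le_add (tsum_one_div_add_mul_add_le hl' hlr') h_tail_right
    _ = _ := by ring

/-- For `1 ≤ l < r ≤ n`, the sum over `m ≤ -1` and `m ≥ n+2` of `1/(|r-m|·|m-l|)`
is at most `(1/(r-l))·(log((n+1-l)/(n+1-r)) + log(r/l))`. -/
theorem tail_sum_log_bound (n r l : ℕ) (hn : 1 ≤ n)
    (hl : 1 ≤ l) (hlr : l < r) (hrn : r ≤ n) :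
    (∑' m : {m : ℤ // m ≤ -1 ∨ (n : ℤ) + 2 ≤ m},
        1 / (|(r : ℝ) - (m.1 : ℝ)| * |(m.1 : ℝ) - (l : ℝ)|)) ≤
      (1 / ((r : ℝ) - l)) *
        (Real.log (((n : ℝ) + 1 - l) / ((n : ℝ) + 1 - r)) + Real.log ((r : ℝ) / l)) :=
  tail_sum_log_bound_general n r l hl hlr hrn
end

section
/- For integers 1 ≤ l < r ≤ n, we have log((n+1-l)/(n+1-r)) ≤ (r-l)/(n+1-r) and log(r/l) ≤ (r-l)/l; consequently Σ_{m≤-1, m≥n+2} 1/(|r-m||m-l|) ≤ 1/(n+1-r) + 1/l. -/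
open Real Filter Topology

/-! Both logarithmic bounds are `log t ≤ t - 1`. For the tail sum, the substitutions
`m = -1 - j` and `m = n + 2 + j` turn the two halves into series `∑ 1 / ((a + j + 1) (b + j + 1))`
with `0 < a ≤ b`, namely `(a, b) = (l, r)` and `(a, b) = (n + 1 - r, n + 1 - l)`; each is
dominated termwise by the telescoping series `∑ (1 / (a + j) - 1 / (a + j + 1)) = 1 / a`. -/

theorem log_div_le_sub_div {x y : ℝ} (hx : 0 < x) (hy : 0 < y) :
    log (x / y) ≤ (x - y) / y :=
  (log_le_sub_one_of_pos (div_pos hx hy)).trans_eq (by field_simp)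

theorem hasSum_sub_succ_of_antitone {f : ℕ → ℝ} {l : ℝ} (hf : Antitone f)
    (hl : Tendsto f atTop (𝓝 l)) : HasSum (fun n ↦ f n - f (n + 1)) (f 0 - l) := by
  rw [hasSum_iff_tendsto_nat_of_nonneg fun n ↦ sub_nonneg.2 (hf n.le_succ)]
  simp_rw [Finset.sum_range_sub']
  exact tendsto_const_nhds.sub hl

theorem hasSum_one_div_add_sub_one_div_add_succ {a : ℝ} (ha : 0 < a) :
    HasSum (fun n : ℕ ↦ 1 / (a + n) - 1 / (a + n + 1)) (1 / a) := by
  have hanti : Antitone fun n : ℕ ↦ 1 / (a + n) := fun m n hmn ↦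
    one_div_le_one_div_of_le (by positivity) (by gcongr)
  have hlim : Tendsto (fun n : ℕ ↦ 1 / (a + n)) atTop (𝓝 0) :=
    tendsto_const_nhds.div_atTop (tendsto_atTop_add_const_left _ a tendsto_natCast_atTop_atTop)
  simpa [add_assoc] using hasSum_sub_succ_of_antitone hanti hlim

theorem one_div_mul_add_succ_le {a b : ℝ} (ha : 0 < a) (hab : a ≤ b) (n : ℕ) :
    1 / ((a + n + 1) * (b + n + 1)) ≤ 1 / (a + n) - 1 / (a + n + 1) := by
  have hdiff : 1 / (a + n) - 1 / (a + n + 1) = 1 / ((a + n + 1) * (a + n)) := by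
    field_simp; ring
  rw [hdiff]
  exact one_div_le_one_div_of_le (by positivity)
    (mul_le_mul_of_nonneg_left (by linarith) (by positivity))

theorem summable_one_div_mul_add_succ {a b : ℝ} (ha : 0 < a) (hab : a ≤ b) :
    Summable fun n : ℕ ↦ 1 / ((a + n + 1) * (b + n + 1)) :=
  have hb : 0 < b := ha.trans_le hab
  .of_nonneg_of_le (fun _ ↦ by positivity) (one_div_mul_add_succ_le ha hab)
    (hasSum_one_div_add_sub_one_div_add_succ ha).summable

theorem tsum_one_div_mul_add_succ_le {a b : ℝ} (ha : 0 < a) (hab : a ≤ b) :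
    ∑' n : ℕ, 1 / ((a + n + 1) * (b + n + 1)) ≤ 1 / a :=
  have h := hasSum_one_div_add_sub_one_div_add_succ ha
  (Summable.tsum_le_tsum (one_div_mul_add_succ_le ha hab) (summable_one_div_mul_add_succ ha hab)
    h.summable).trans_eq h.tsum_eq

theorem Int.range_neg_one_sub_natCast :
    Set.range (fun n : ℕ ↦ -1 - (n : ℤ)) = Set.Iic (-1) := by
  ext m
  simp only [Set.mem_range, Set.mem_Iic]
  exact ⟨by rintro ⟨n, rfl⟩; omega, fun hm ↦ ⟨(-1 - m).toNat, by omega⟩⟩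

theorem Int.range_add_natCast (c : ℤ) :
    Set.range (fun n : ℕ ↦ c + (n : ℤ)) = Set.Ici c := by
  ext m
  simp only [Set.mem_range, Set.mem_Ici]
  exact ⟨by rintro ⟨n, rfl⟩; omega, fun hm ↦ ⟨(m - c).toNat, by omega⟩⟩

theorem HasSum.subtype_le_neg_one_or_le {α : Type*} [AddCommMonoid α] [TopologicalSpace α]
    [ContinuousAdd α] {f : ℤ → α} {c : ℤ} {a b : α} (hc : 0 ≤ c)
    (ha : HasSum (fun n : ℕ ↦ f (-1 - n)) a) (hb : HasSum (fun n : ℕ ↦ f (c + n)) b) :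
    HasSum (fun m : {m : ℤ // m ≤ -1 ∨ c ≤ m} ↦ f m) (a + b) := by
  have hneg : Function.Injective fun n : ℕ ↦ -1 - (n : ℤ) := fun _ _ h ↦ by simpa using h
  have hpos : Function.Injective fun n : ℕ ↦ c + (n : ℤ) := fun _ _ h ↦ by simpa using h
  have ha' := hneg.hasSum_range_iff.2 ha
  have hb' := hpos.hasSum_range_iff.2 hb
  rw [Int.range_neg_one_sub_natCast] at ha'
  rw [Int.range_add_natCast] at hb'
  exact ha'.add_disjoint (Set.Iic_disjoint_Ici.2 (by omega)) hb'

theorem tail_sum_simple_bound_general (n r l : ℕ)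
    (hl : 1 ≤ l) (hlr : l < r) (hrn : r ≤ n) :
    Real.log (((n : ℝ) + 1 - l) / ((n : ℝ) + 1 - r)) ≤ ((r : ℝ) - l) / ((n : ℝ) + 1 - r) ∧
    Real.log ((r : ℝ) / l) ≤ ((r : ℝ) - l) / l ∧
    (∑' m : {m : ℤ // m ≤ -1 ∨ (n : ℤ) + 2 ≤ m},
        1 / (|(r : ℝ) - (m.1 : ℝ)| * |(m.1 : ℝ) - (l : ℝ)|)) ≤
      1 / ((n : ℝ) + 1 - r) + 1 / l := by
  have hl₀ : (0 : ℝ) < l := by exact_mod_cast hl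
  have hlr' : (l : ℝ) < r := by exact_mod_cast hlr
  have hr₀ : (0 : ℝ) < n + 1 - r := by
    have : (r : ℝ) ≤ n := by exact_mod_cast hrn
    linarith
  refine ⟨(log_div_le_sub_div (by linarith) hr₀).trans_eq (by ring),
    log_div_le_sub_div (by linarith) hl₀, ?_⟩
  let F : ℤ → ℝ := fun m ↦ 1 / (|(r : ℝ) - m| * |(m : ℝ) - l|)
  have hneg : (fun j : ℕ ↦ F (-1 - j)) =
      fun j : ℕ ↦ 1 / (((l : ℝ) + j + 1) * (r + j + 1)) := by
    funext j
    simp only [F, Int.cast_sub, Int.cast_neg, Int.cast_one, Int.cast_natCast]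
    rw [abs_of_nonneg (by linarith), abs_of_nonpos (by linarith), mul_comm]
    ring_nf
  have hpos : (fun j : ℕ ↦ F (n + 2 + j)) =
      fun j : ℕ ↦ 1 / (((n : ℝ) + 1 - r + j + 1) * (n + 1 - l + j + 1)) := by
    funext j
    simp only [F, Int.cast_add, Int.cast_ofNat, Int.cast_natCast]
    rw [abs_of_nonpos (by linarith), abs_of_nonneg (by linarith)]
    ring_nf
  have hsum := HasSum.subtype_le_neg_one_or_le (f := F) (c := n + 2) (by positivity)
    (hneg ▸ (summable_one_div_mul_add_succ hl₀ hlr'.le).hasSum)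
    (hpos ▸ (summable_one_div_mul_add_succ hr₀ (by linarith)).hasSum)
  rw [hsum.tsum_eq, hneg, hpos, add_comm]
  exact add_le_add (tsum_one_div_mul_add_succ_le hr₀ (by linarith))
    (tsum_one_div_mul_add_succ_le hl₀ hlr'.le)

/-- For `1 ≤ l < r ≤ n`: `log((n+1-l)/(n+1-r)) ≤ (r-l)/(n+1-r)`, `log(r/l) ≤ (r-l)/l`,
and consequently the tail sum is at most `1/(n+1-r) + 1/l`. -/
theorem tail_sum_simple_bound (n r l : ℕ) (hn : 1 ≤ n)
    (hl : 1 ≤ l) (hlr : l < r) (hrn : r ≤ n) :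
    Real.log (((n : ℝ) + 1 - l) / ((n : ℝ) + 1 - r)) ≤ ((r : ℝ) - l) / ((n : ℝ) + 1 - r) ∧
    Real.log ((r : ℝ) / l) ≤ ((r : ℝ) - l) / l ∧
    (∑' m : {m : ℤ // m ≤ -1 ∨ (n : ℤ) + 2 ≤ m},
        1 / (|(r : ℝ) - (m.1 : ℝ)| * |(m.1 : ℝ) - (l : ℝ)|)) ≤
      1 / ((n : ℝ) + 1 - r) + 1 / l :=
  tail_sum_simple_bound_general n r l hl hlr hrn
end

section
/- Let b_{rl} = (1/2π) Σ_{m ≤ 0 or m ≥ n+1} a_{r-m} a_{m-l}, where (a_k) are the Fourier coefficients of the step function a with jump at L. Then for all 1 ≤ l < r ≤ n, |b_{rl}| ≤ (16/π²)·(1 + log n)/(r - l). -/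
/-!
For `k ≠ 0` the coefficients satisfy `‖a k‖ ≤ 2 √(2/π) / |k|`, so every term of the series is at
most `(8/π) / (|r - m| |m - l|)`. On the left tail `m = -k` and on the right tail `m = n + 1 + k`
these distances are `c + k` and `c + d + k`, where `d = r - l` and `c = l` resp. `c = n + 1 - r`.
The partial fractions `1/((c+k)(c+d+k)) = (1/(c+k) - 1/(c+d+k))/d` telescope, so each tail is
at most `(1/d) ∑_{c ≤ j < c + d} 1/j ≤ (1 + log n)/d`, a piece of the harmonic sum `H_n`.
-/

open Real

lemma sum_Ico_inv_le_one_add_log {c d n : ℕ} (hc : 1 ≤ c) (hcd : c + d ≤ n + 1) :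
    ∑ j ∈ Finset.Ico c (c + d), (j : ℝ)⁻¹ ≤ 1 + log n :=
  calc ∑ j ∈ Finset.Ico c (c + d), (j : ℝ)⁻¹
      ≤ ∑ j ∈ Finset.Icc 1 n, (j : ℝ)⁻¹ :=
        Finset.sum_le_sum_of_subset_of_nonneg
          (fun j hj => by simp only [Finset.mem_Ico, Finset.mem_Icc] at hj ⊢; omega)
          (fun _ _ _ => by positivity)
    _ = harmonic n := by rw [harmonic_eq_sum_Icc]; push_cast; rfl
    _ ≤ 1 + log n := harmonic_le_one_add_log n

lemma sum_range_inv_mul_inv_add_le {c d : ℕ} (hc : 1 ≤ c) (hd : 1 ≤ d) (N : ℕ) :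
    ∑ k ∈ Finset.range N, (((c + k) * (c + d + k) : ℕ) : ℝ)⁻¹ ≤
      (∑ j ∈ Finset.Ico c (c + d), (j : ℝ)⁻¹) / d := by
  have htelescope : ∀ k : ℕ, (((c + k) * (c + d + k) : ℕ) : ℝ)⁻¹ =
      (((c + k : ℕ) : ℝ)⁻¹ - ((c + (d + k) : ℕ) : ℝ)⁻¹) / d := by
    intro k
    have : (c : ℝ) + k ≠ 0 := by positivity
    field_simp
    push_cast
    ring
  have hshift : ∑ k ∈ Finset.range (d + N), ((c + k : ℕ) : ℝ)⁻¹ =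
      ∑ j ∈ Finset.Ico c (c + d), (j : ℝ)⁻¹ + ∑ k ∈ Finset.range N, ((c + (d + k) : ℕ) : ℝ)⁻¹ := by
    rw [Finset.sum_range_add, Finset.sum_Ico_eq_sum_range, Nat.add_sub_cancel_left]
  have hmono : ∑ k ∈ Finset.range N, ((c + k : ℕ) : ℝ)⁻¹ ≤
      ∑ k ∈ Finset.range (d + N), ((c + k : ℕ) : ℝ)⁻¹ :=
    Finset.sum_le_sum_of_subset_of_nonneg (Finset.range_subset_range.2 (Nat.le_add_left _ _))
      (fun _ _ _ => by positivity)
  simp_rw [htelescope, ← Finset.sum_div, Finset.sum_sub_distrib]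
  gcongr
  linarith

lemma summable_inv_mul_inv_add {c d : ℕ} (hc : 1 ≤ c) (hd : 1 ≤ d) :
    Summable (fun k : ℕ => (((c + k) * (c + d + k) : ℕ) : ℝ)⁻¹) :=
  summable_of_sum_range_le (fun _ => by positivity) (sum_range_inv_mul_inv_add_le hc hd)

lemma tsum_inv_mul_inv_add_le {c d n : ℕ} (hc : 1 ≤ c) (hd : 1 ≤ d) (hcd : c + d ≤ n + 1) :
    ∑' k : ℕ, (((c + k) * (c + d + k) : ℕ) : ℝ)⁻¹ ≤ (1 + log n) / d :=
  (Real.tsum_le_of_sum_range_le (fun _ => by positivity) (sum_range_inv_mul_inv_add_le hc hd)).trans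
    (by gcongr; exact sum_Ico_inv_le_one_add_log hc hcd)

def natSumNatEquivComplIcc (n : ℕ) : ℕ ⊕ ℕ ≃ {m : ℤ // m ≤ 0 ∨ (n : ℤ) + 1 ≤ m} where
  toFun := Sum.elim (fun k => ⟨-k, by omega⟩) (fun k => ⟨n + 1 + k, by omega⟩)
  invFun m := if m.1 ≤ 0 then .inl (-m.1).toNat else .inr (m.1 - ((n : ℤ) + 1)).toNat
  left_inv j := by
    rcases j with k | k
    · simp
    · simp only [Sum.elim_inr]
      split_ifs <;> simp <;> omega
  right_inv m := by
    by_cases hm : m.1 ≤ 0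
    · simp [hm]
    · ext
      simp [hm]
      omega

section StepSymbol

variable {L : ℝ} {a : ℤ → ℂ}
  (hak : ∀ k : ℤ, k ≠ 0 →
    a k = (√(2 / π) : ℂ) * ((-1) ^ k / (Complex.I * k)) *
      (1 - Complex.exp (Complex.I * k * (L + π))))
include hak

lemma norm_coeff_le {k : ℤ} (hk : k ≠ 0) : ‖a k‖ ≤ 2 * √(2 / π) / k.natAbs := by
  have hexp : ‖Complex.exp (Complex.I * k * (L + π))‖ = 1 := by
    rw [Complex.norm_exp]; simp
  have hjump : ‖1 - Complex.exp (Complex.I * k * (L + π))‖ ≤ 2 := by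
    linarith [norm_sub_le (1 : ℂ) (Complex.exp (Complex.I * k * (L + π))), norm_one (α := ℂ)]
  rw [hak k hk, norm_mul, norm_mul, norm_div, norm_mul, Complex.norm_I, one_mul,
    Complex.norm_intCast, norm_zpow, norm_neg, norm_one, one_zpow, Complex.norm_real,
    Real.norm_of_nonneg (Real.sqrt_nonneg _), ← Int.cast_abs, ← Nat.cast_natAbs]
  calc √(2 / π) * (1 / k.natAbs) * ‖1 - Complex.exp (Complex.I * k * (L + π))‖
      ≤ √(2 / π) * (1 / k.natAbs) * 2 := by gcongr
    _ = 2 * √(2 / π) / k.natAbs := by ring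

lemma norm_coeff_mul_coeff_le {i j : ℤ} {p q : ℕ} (hi : i.natAbs = p) (hj : j.natAbs = q)
    (hp : 0 < p) (hq : 0 < q) : ‖a i * a j‖ ≤ 8 / π * ((p * q : ℕ) : ℝ)⁻¹ := by
  subst hi hj
  have hsq : √(2 / π) * √(2 / π) = 2 / π := Real.mul_self_sqrt (by positivity)
  rw [norm_mul]
  calc ‖a i‖ * ‖a j‖ ≤ (2 * √(2 / π) / i.natAbs) * (2 * √(2 / π) / j.natAbs) :=
        mul_le_mul (norm_coeff_le hak (by omega)) (norm_coeff_le hak (by omega)) (norm_nonneg _)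
          (by positivity)
    _ = 8 / π * ((i.natAbs * j.natAbs : ℕ) : ℝ)⁻¹ := by
        rw [div_mul_div_comm, mul_mul_mul_comm, hsq]
        push_cast
        ring

lemma norm_tsum_coeff_mul_coeff_le {n l d : ℕ} (hl : 1 ≤ l) (hd : 1 ≤ d) (hldn : l + d ≤ n) :
    ‖∑' m : {m : ℤ // m ≤ 0 ∨ (n : ℤ) + 1 ≤ m}, a (l + d - m.1) * a (m.1 - l)‖ ≤
      16 / π * ((1 + log n) / d) := by
  obtain ⟨c, hc⟩ : ∃ c : ℕ, n + 1 = l + d + c := ⟨n + 1 - (l + d), by omega⟩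
  have hc1 : 1 ≤ c := by omega
  let majorant (c k : ℕ) : ℝ := 8 / π * (((c + k) * (c + d + k) : ℕ) : ℝ)⁻¹
  have hbound : ∀ j, ‖a (l + d - natSumNatEquivComplIcc n j) * a (natSumNatEquivComplIcc n j - l)‖
      ≤ Sum.elim (majorant l) (majorant c) j := by
    rintro (k | k)
    · rw [mul_comm]
      simp only [natSumNatEquivComplIcc, Equiv.coe_fn_mk, Sum.elim_inl]
      exact norm_coeff_mul_coeff_le hak (by omega) (by omega) (by omega) (by omega)
    · simp only [natSumNatEquivComplIcc, Equiv.coe_fn_mk, Sum.elim_inr]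
      exact norm_coeff_mul_coeff_le hak (by omega) (by omega) (by omega) (by omega)
  have hsum : HasSum (Sum.elim (majorant l) (majorant c))
      (8 / π * ∑' k : ℕ, (((l + k) * (l + d + k) : ℕ) : ℝ)⁻¹ +
        8 / π * ∑' k : ℕ, (((c + k) * (c + d + k) : ℕ) : ℝ)⁻¹) :=
    ((summable_inv_mul_inv_add hl hd).hasSum.mul_left _).sum
      ((summable_inv_mul_inv_add hc1 hd).hasSum.mul_left _)
  rw [← (natSumNatEquivComplIcc n).tsum_eq]
  calc _ ≤ _ := tsum_of_norm_bounded hsum hbound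
    _ ≤ 8 / π * ((1 + log n) / d) + 8 / π * ((1 + log n) / d) := by
        gcongr <;> exact tsum_inv_mul_inv_add_le (by omega) hd (by omega)
    _ = 16 / π * ((1 + log n) / d) := by ring

end StepSymbol

theorem b_offdiag_bound_general (L : ℝ)
    (a : ℤ → ℂ)
    (hak : ∀ k : ℤ, k ≠ 0 →
      a k = (Real.sqrt (2 / π) : ℂ) * ((-1) ^ k / (Complex.I * k)) *
        (1 - Complex.exp (Complex.I * k * (L + π))))
    (n : ℕ) (r l : ℤ) (hl : 1 ≤ l) (hlr : l < r) (hrn : r ≤ (n : ℤ)) :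
    ‖((1 / (2 * π) : ℂ) *
        ∑' m : {m : ℤ // m ≤ 0 ∨ (n : ℤ) + 1 ≤ m}, a (r - m.1) * a (m.1 - l))‖ ≤
      (16 / π ^ 2) * (1 + Real.log n) / ((r : ℝ) - (l : ℝ)) := by
  obtain ⟨l, rfl⟩ := Int.eq_ofNat_of_zero_le (by omega : 0 ≤ l)
  obtain ⟨d, rfl⟩ : ∃ d : ℕ, r = l + d := ⟨(r - l).toNat, by omega⟩
  have hlog : 0 ≤ log n := Real.log_nonneg (by norm_cast; omega)
  have hnorm : ‖(1 / (2 * π) : ℂ)‖ = 1 / (2 * π) := by simp [abs_of_pos pi_pos]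
  rw [norm_mul, hnorm]
  push_cast
  calc 1 / (2 * π) * ‖∑' m : {m : ℤ // m ≤ 0 ∨ (n : ℤ) + 1 ≤ m}, a (l + d - m.1) * a (m.1 - l)‖
      ≤ 1 / (2 * π) * (16 / π * ((1 + log n) / d)) := by
        gcongr
        exact norm_tsum_coeff_mul_coeff_le hak (by omega) (by omega) (by omega)
    _ = 8 / π ^ 2 * ((1 + log n) / d) := by ring
    _ ≤ 16 / π ^ 2 * ((1 + log n) / d) := by gcongr; norm_num
    _ = 16 / π ^ 2 * (1 + log n) / (l + d - l) := by rw [add_sub_cancel_left]; ring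

/-- Off-diagonal bound `|b_{rl}| ≤ (16/π²)(1 + log n)/(r - l)` for the entries of the
matrix `B_n = P A Q A P` built from the Fourier coefficients of the step symbol. -/
theorem b_offdiag_bound (L : ℝ) (hL0 : 0 ≤ L) (hLπ : L < π)
    (a : ℤ → ℂ)
    (ha0 : a 0 = (-(Real.sqrt (2 / π)) * L : ℂ))
    (hak : ∀ k : ℤ, k ≠ 0 →
      a k = (Real.sqrt (2 / π) : ℂ) * ((-1) ^ k / (Complex.I * k)) *
        (1 - Complex.exp (Complex.I * k * (L + π))))
    (n : ℕ) (hn : 1 ≤ n) (r l : ℤ) (hl : 1 ≤ l) (hlr : l < r) (hrn : r ≤ (n : ℤ)) :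
    ‖((1 / (2 * π) : ℂ) *
        ∑' m : {m : ℤ // m ≤ 0 ∨ (n : ℤ) + 1 ≤ m}, a (r - m.1) * a (m.1 - l))‖ ≤
      (16 / π ^ 2) * (1 + Real.log n) / ((r : ℝ) - (l : ℝ)) :=
  b_offdiag_bound_general L a hak n r l hl hlr hrn
end

section
/- With b_{rl} as in the squared Toeplitz construction, for all 1 ≤ l ≤ r ≤ n we have |b_{rl}| ≤ (8/π²)·(1/(n+1-r) + 1/l). -/
/-!
For `k ≠ 0` the coefficients satisfy `‖a k‖ ≤ 2 √(2/π) / |k|`. For `m ≤ 0` both indices `r - m`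
and `m - l` have modulus at least `l - m`, and for `m ≥ n + 1` both have modulus at least
`m - r`. Hence the terms of the two tails are dominated by `(8/π) / (c + j)²`, `j ∈ ℕ`, with
`c = l` and `c = n + 1 - r` respectively, and `∑ j, 1 / (c + j)² ≤ 2 / c` for `c ≥ 1`.
-/

open Real

section InvSqTail

variable {c : ℝ}

-- `1/x² ≤ 2/x - 2/(x+1) = 2/(x(x+1))` as soon as `x ≥ 1`.
lemma sum_range_one_div_add_sq_le (hc : 1 ≤ c) (N : ℕ) :
    ∑ j ∈ Finset.range N, 1 / (c + j) ^ 2 ≤ 2 / c - 2 / (c + N) := by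
  induction N with
  | zero => simp
  | succ N ih =>
    have hx : 0 < c + N := by positivity
    have hstep : 1 / (c + N) ^ 2 ≤ 2 / (c + N) - 2 / (c + N + 1) := by
      rw [div_sub_div _ _ hx.ne' (by positivity), div_le_div_iff₀ (by positivity) (by positivity)]
      nlinarith
    rw [Finset.sum_range_succ, Nat.cast_succ, ← add_assoc]
    linarith

lemma sum_range_one_div_add_sq_le_two_div (hc : 1 ≤ c) (N : ℕ) :
    ∑ j ∈ Finset.range N, 1 / (c + j) ^ 2 ≤ 2 / c := by
  have : 0 ≤ 2 / (c + N) := by positivity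
  linarith [sum_range_one_div_add_sq_le hc N]

lemma summable_one_div_add_sq (hc : 1 ≤ c) : Summable fun j : ℕ => 1 / (c + j) ^ 2 :=
  summable_of_sum_range_le (fun _ => by positivity) (sum_range_one_div_add_sq_le_two_div hc)

lemma tsum_one_div_add_sq_le (hc : 1 ≤ c) : ∑' j : ℕ, 1 / (c + j) ^ 2 ≤ 2 / c :=
  (summable_one_div_add_sq hc).tsum_le_of_sum_range_le (sum_range_one_div_add_sq_le_two_div hc)

end InvSqTail

lemma norm_tsum_sum_le_of_le_div_add_sq {E : Type*} [SeminormedAddCommGroup E]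
    {f : ℕ ⊕ ℕ → E} {B c₁ c₂ : ℝ} (hB : 0 ≤ B) (hc₁ : 1 ≤ c₁) (hc₂ : 1 ≤ c₂)
    (hf₁ : ∀ j : ℕ, ‖f (.inl j)‖ ≤ B / (c₁ + j) ^ 2)
    (hf₂ : ∀ j : ℕ, ‖f (.inr j)‖ ≤ B / (c₂ + j) ^ 2) :
    ‖∑' x, f x‖ ≤ 2 * B * (1 / c₁ + 1 / c₂) := by
  set g : ℕ ⊕ ℕ → ℝ :=
    Sum.elim (fun j => B / (c₁ + j) ^ 2) (fun j => B / (c₂ + j) ^ 2)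
  have hsummable (c : ℝ) (hc : 1 ≤ c) : Summable fun j : ℕ => B / (c + j) ^ 2 := by
    simpa only [div_eq_mul_one_div B] using (summable_one_div_add_sq hc).mul_left B
  have hg₁ : Summable (g ∘ .inl) := hsummable c₁ hc₁
  have hg₂ : Summable (g ∘ .inr) := hsummable c₂ hc₂
  have htsum (c : ℝ) (hc : 1 ≤ c) : ∑' j : ℕ, B / (c + j) ^ 2 ≤ B * (2 / c) := by
    simpa only [div_eq_mul_one_div B, tsum_mul_left] using
      mul_le_mul_of_nonneg_left (tsum_one_div_add_sq_le hc) hB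
  calc ‖∑' x, f x‖ ≤ ∑' x, g x :=
        tsum_of_norm_bounded (hg₁.sum g hg₂).hasSum (Sum.forall.2 ⟨hf₁, hf₂⟩)
    _ = ∑' j : ℕ, B / (c₁ + j) ^ 2 + ∑' j : ℕ, B / (c₂ + j) ^ 2 := hg₁.tsum_sum hg₂
    _ ≤ B * (2 / c₁) + B * (2 / c₂) := add_le_add (htsum c₁ hc₁) (htsum c₂ hc₂)
    _ = 2 * B * (1 / c₁ + 1 / c₂) := by ring

def natSumNatEquivOutsideIcc (n : ℕ) :
    ℕ ⊕ ℕ ≃ {m : ℤ // m ≤ 0 ∨ (n : ℤ) + 1 ≤ m} where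
  toFun := Sum.elim (fun j => ⟨-j, by omega⟩) (fun j => ⟨n + 1 + j, by omega⟩)
  invFun m := if m.1 ≤ 0 then .inl (-m.1).toNat else .inr (m.1 - n - 1).toNat
  left_inv x := by
    rcases x with j | j
    · simp
    · simp only [Sum.elim_inr, show ¬((n : ℤ) + 1 + j ≤ 0) by omega, if_false, Sum.inr.injEq]
      omega
  right_inv m := by
    rcases m with ⟨m, hm⟩
    by_cases h : m ≤ 0
    · simp only [if_pos h, Sum.elim_inl, Subtype.mk.injEq]
      omega
    · simp only [if_neg h, Sum.elim_inr, Subtype.mk.injEq]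
      omega

@[simp]
lemma natSumNatEquivOutsideIcc_inl (n j : ℕ) : (natSumNatEquivOutsideIcc n (.inl j) : ℤ) = -j :=
  rfl

@[simp]
lemma natSumNatEquivOutsideIcc_inr (n j : ℕ) :
    (natSumNatEquivOutsideIcc n (.inr j) : ℤ) = n + 1 + j :=
  rfl

lemma norm_mul_zpow_div_mul_one_sub_exp_le (c θ : ℝ) (k : ℤ) :
    ‖(c : ℂ) * ((-1) ^ k / (Complex.I * k)) * (1 - Complex.exp (Complex.I * k * θ))‖ ≤
      2 * |c| / |(k : ℝ)| := by
  have hexp : ‖Complex.exp (Complex.I * k * θ)‖ = 1 := by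
    rw [show Complex.I * k * θ = ((k * θ : ℝ) : ℂ) * Complex.I by push_cast; ring]
    exact Complex.norm_exp_ofReal_mul_I _
  have hsub : ‖1 - Complex.exp (Complex.I * k * θ)‖ ≤ 2 := by
    linarith [norm_sub_le (1 : ℂ) (Complex.exp (Complex.I * k * θ)), norm_one (α := ℂ)]
  rw [norm_mul, norm_mul, norm_div, norm_mul, norm_zpow, norm_neg, norm_one, one_zpow,
    Complex.norm_I, one_mul, Complex.norm_intCast, Complex.norm_real, Real.norm_eq_abs]
  calc |c| * (1 / |(k : ℝ)|) * ‖1 - Complex.exp (Complex.I * k * θ)‖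
      ≤ |c| * (1 / |(k : ℝ)|) * 2 := by gcongr
    _ = 2 * |c| / |(k : ℝ)| := by ring

section Products

variable {R : Type*} [SeminormedRing R] {f : ℤ → R} {A : ℝ}

lemma norm_mul_le_of_le_div_abs (hf : ∀ k : ℤ, k ≠ 0 → ‖f k‖ ≤ A / |(k : ℝ)|)
    {p q : ℤ} {d : ℝ} (hd : 0 < d) (hp : d ≤ |(p : ℝ)|) (hq : d ≤ |(q : ℝ)|) :
    ‖f p * f q‖ ≤ A ^ 2 / d ^ 2 := by
  have hp0 : p ≠ 0 := by rintro rfl; simp only [Int.cast_zero, abs_zero] at hp; linarith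
  have hq0 : q ≠ 0 := by rintro rfl; simp only [Int.cast_zero, abs_zero] at hq; linarith
  have hA : 0 ≤ A := by
    have := mul_nonneg ((norm_nonneg _).trans (hf p hp0)) (hd.trans_le hp).le
    rwa [div_mul_cancel₀ _ (hd.trans_le hp).ne'] at this
  calc ‖f p * f q‖ ≤ ‖f p‖ * ‖f q‖ := norm_mul_le _ _
    _ ≤ (A / |(p : ℝ)|) * (A / |(q : ℝ)|) :=
        mul_le_mul (hf p hp0) (hf q hq0) (norm_nonneg _) (by positivity)
    _ ≤ (A / d) * (A / d) := by gcongr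
    _ = A ^ 2 / d ^ 2 := by ring

lemma norm_tsum_outsideIcc_mul_le (hf : ∀ k : ℤ, k ≠ 0 → ‖f k‖ ≤ A / |(k : ℝ)|)
    {n : ℕ} {r l : ℤ} (hl : 1 ≤ l) (hlr : l ≤ r) (hrn : r ≤ n) :
    ‖∑' m : {m : ℤ // m ≤ 0 ∨ (n : ℤ) + 1 ≤ m}, f (r - m.1) * f (m.1 - l)‖ ≤
      2 * A ^ 2 * (1 / l + 1 / (n + 1 - r)) := by
  have hlR : (1 : ℝ) ≤ l := by exact_mod_cast hl
  have hlrR : (l : ℝ) ≤ r := by exact_mod_cast hlr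
  have hrnR : (r : ℝ) ≤ n := by exact_mod_cast hrn
  rw [← (natSumNatEquivOutsideIcc n).tsum_eq]
  refine norm_tsum_sum_le_of_le_div_add_sq (sq_nonneg A) hlR (by linarith)
    (fun j => ?_) (fun j => ?_) <;> have hj : (0 : ℝ) ≤ j := j.cast_nonneg
  · refine norm_mul_le_of_le_div_abs hf (by linarith)
      (le_abs.2 (.inl ?_)) (le_abs.2 (.inr ?_)) <;>
      simp only [natSumNatEquivOutsideIcc_inl] <;> push_cast <;> linarith
  · refine norm_mul_le_of_le_div_abs hf (by linarith)
      (le_abs.2 (.inr ?_)) (le_abs.2 (.inl ?_)) <;>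
      simp only [natSumNatEquivOutsideIcc_inr] <;> push_cast <;> linarith

end Products

theorem b_edge_bound_general (L : ℝ)
    (a : ℤ → ℂ)
    (hak : ∀ k : ℤ, k ≠ 0 →
      a k = (Real.sqrt (2 / π) : ℂ) * ((-1) ^ k / (Complex.I * k)) *
        (1 - Complex.exp (Complex.I * k * (L + π))))
    (n : ℕ) (r l : ℤ) (hl : 1 ≤ l) (hlr : l ≤ r) (hrn : r ≤ (n : ℤ)) :
    ‖(1 / (2 * π) : ℂ) *
        ∑' m : {m : ℤ // m ≤ 0 ∨ (n : ℤ) + 1 ≤ m}, a (r - m.1) * a (m.1 - l)‖ ≤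
      (8 / π ^ 2) * (1 / ((n : ℝ) + 1 - (r : ℝ)) + 1 / (l : ℝ)) := by
  have ha (k : ℤ) (hk : k ≠ 0) : ‖a k‖ ≤ 2 * Real.sqrt (2 / π) / |(k : ℝ)| := by
    have := norm_mul_zpow_div_mul_one_sub_exp_le (Real.sqrt (2 / π)) (L + π) k
    push_cast at this
    rwa [abs_of_nonneg (Real.sqrt_nonneg _), ← hak k hk] at this
  have hA : (2 * Real.sqrt (2 / π)) ^ 2 = 8 / π := by
    rw [mul_pow, Real.sq_sqrt (by positivity)]; ring
  have hnorm : ‖(1 / (2 * π) : ℂ)‖ = 1 / (2 * π) := by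
    rw [norm_div, norm_one, norm_mul, Complex.norm_two, Complex.norm_real,
      Real.norm_of_nonneg pi_pos.le]
  rw [norm_mul, hnorm]
  calc 1 / (2 * π) * ‖_‖
      ≤ 1 / (2 * π) * (2 * (2 * Real.sqrt (2 / π)) ^ 2 * (1 / l + 1 / (n + 1 - r))) := by
        gcongr
        exact norm_tsum_outsideIcc_mul_le ha hl hlr hrn
    _ = 8 / π ^ 2 * (1 / (n + 1 - r) + 1 / l) := by
        rw [hA]; field_simp; ring

/-- Bound `|b_{rl}| ≤ (8/π²)(1/(n+1-r) + 1/l)` for `1 ≤ l ≤ r ≤ n`. -/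
theorem b_edge_bound (L : ℝ) (hL0 : 0 ≤ L) (hLπ : L < π)
    (a : ℤ → ℂ)
    (ha0 : a 0 = (-(Real.sqrt (2 / π)) * L : ℂ))
    (hak : ∀ k : ℤ, k ≠ 0 →
      a k = (Real.sqrt (2 / π) : ℂ) * ((-1) ^ k / (Complex.I * k)) *
        (1 - Complex.exp (Complex.I * k * (L + π))))
    (n : ℕ) (hn : 1 ≤ n) (r l : ℤ) (hl : 1 ≤ l) (hlr : l ≤ r) (hrn : r ≤ (n : ℤ)) :
    ‖(1 / (2 * π) : ℂ) *
        ∑' m : {m : ℤ // m ≤ 0 ∨ (n : ℤ) + 1 ≤ m}, a (r - m.1) * a (m.1 - l)‖ ≤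
      (8 / π ^ 2) * (1 / ((n : ℝ) + 1 - (r : ℝ)) + 1 / (l : ℝ)) :=
  b_edge_bound_general L a hak n r l hl hlr hrn
end

section
/- Let B, D be Hermitian operators on an (n)-dimensional space with B = ΞBΞ + D, where Π, Ξ are complementary orthogonal projections, and suppose |⟨Du,u⟩| ≤ α‖Πu‖² + β‖Ξu‖² for all u, with α < λ. Then n₊(λ, B) ≤ n₊(λ − β, ΞBΞ) and n₊(λ, B) ≥ n₊(λ + β, ΞBΞ), where n₊ counts eigenvalues strictly above the given threshold. -/
/-- Number of eigenvalues (with multiplicity) of a Hermitian matrix strictly above `t`. -/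
noncomputable def countAbove {n : ℕ} {M : Matrix (Fin n) (Fin n) ℂ}
    (hM : M.IsHermitian) (t : ℝ) : ℕ :=
  (Finset.univ.filter fun j => t < hM.eigenvalues j).card

/-!
Both bounds are min–max counting arguments. If the quadratic form of `T` exceeds `t‖u‖²` on the
nonzero vectors of a subspace `W`, then `W` meets the span of the eigenvectors with eigenvalue
`≤ t` only in `0`, so `dim W ≤ n₊(t, T)`; and the span of the eigenvectors above `t` is such a
subspace, of dimension exactly `n₊(t, T)`.

For `n₊(λ, B) ≤ n₊(λ - β, ΞBΞ)`, push the spectral subspace of `B` above `λ` forward by `Ξ`: since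
`‖u‖² = ‖Πu‖² + ‖Ξu‖²`, on it `⟨ΞBΞu, u⟩ > (λ - α)‖Πu‖² + (λ - β)‖Ξu‖² ≥ (λ - β)‖Ξu‖²`, and
`⟨ΞBΞ(Ξu), Ξu⟩ = ⟨ΞBΞu, u⟩`. For `n₊(λ + β, ΞBΞ) ≤ n₊(λ, B)`, the spectral subspace of `ΞBΞ`
above `λ + β ≥ 0` lies in the range of `ΞBΞ`, hence of `Ξ`, where `Π` vanishes and so
`⟨Bu, u⟩ ≥ ⟨ΞBΞu, u⟩ - β‖u‖²`.
-/

open scoped InnerProductSpace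
open Module Submodule Finset Matrix

namespace OrthonormalBasis

variable {𝕜 E ι : Type*} [RCLike 𝕜] [NormedAddCommGroup E] [InnerProductSpace 𝕜 E] [Fintype ι]
  {T : E →ₗ[𝕜] E} {b : OrthonormalBasis ι 𝕜 E} {μ : ι → ℝ} {t : ℝ}

theorem repr_apply_of_apply_eq_smul (hb : ∀ i, T (b i) = (μ i : 𝕜) • b i) (u : E) (i : ι) :
    b.repr (T u) i = μ i * b.repr u i := by
  classical
  conv_lhs => rw [← b.sum_repr u]
  simp [map_sum, hb, smul_smul, b.repr_self, Pi.single_apply, mul_comm]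

theorem re_inner_apply_self_eq_sum (hb : ∀ i, T (b i) = (μ i : 𝕜) • b i) (u : E) :
    RCLike.re ⟪T u, u⟫_𝕜 = ∑ i, μ i * ‖b.repr u i‖ ^ 2 := by
  rw [← b.repr.inner_map_map, PiLp.inner_apply, map_sum]
  refine Finset.sum_congr rfl fun i _ => ?_
  simp [repr_apply_of_apply_eq_smul hb, RCLike.inner_apply, mul_left_comm _ (μ i : 𝕜),
    RCLike.mul_conj]

theorem norm_sq_eq_sum_repr (b : OrthonormalBasis ι 𝕜 E) (u : E) :
    ‖u‖ ^ 2 = ∑ i, ‖b.repr u i‖ ^ 2 := by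
  simp [b.repr_apply_apply, b.sum_sq_norm_inner_right]

theorem finrank_span_image_setOf (b : OrthonormalBasis ι 𝕜 E) (p : ι → Prop) [DecidablePred p] :
    finrank 𝕜 (span 𝕜 (b '' {i | p i})) = #{i | p i} := by
  have h := finrank_span_eq_card (R := 𝕜)
    (b.orthonormal.linearIndependent.comp ((↑) : {i // p i} → ι) Subtype.val_injective)
  rwa [Set.range_comp, Subtype.range_coe_subtype, Fintype.card_subtype] at h

theorem repr_eq_zero_of_mem_span_image {s : Set ι} {v : E} (hv : v ∈ span 𝕜 (b '' s)) {i : ι}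
    (hi : i ∉ s) : b.repr v i = 0 := by
  have := b.toBasis.repr_support_subset_of_mem_span s (by rwa [b.coe_toBasis])
  by_contra h
  exact hi (this (by simpa [b.coe_toBasis_repr_apply] using h))

theorem re_inner_apply_self_le_of_repr_eq_zero (hb : ∀ i, T (b i) = (μ i : 𝕜) • b i) {v : E}
    (hv : ∀ i, t < μ i → b.repr v i = 0) : RCLike.re ⟪T v, v⟫_𝕜 ≤ t * ‖v‖ ^ 2 := by
  rw [re_inner_apply_self_eq_sum hb, b.norm_sq_eq_sum_repr, Finset.mul_sum]
  refine Finset.sum_le_sum fun i _ => ?_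
  by_cases hi : t < μ i
  · simp [hv i hi]
  · exact mul_le_mul_of_nonneg_right (not_lt.mp hi) (by positivity)

theorem lt_re_inner_apply_self_of_mem_span (hb : ∀ i, T (b i) = (μ i : 𝕜) • b i) {v : E}
    (hv : v ∈ span 𝕜 (b '' {i | t < μ i})) (hv0 : v ≠ 0) :
    t * ‖v‖ ^ 2 < RCLike.re ⟪T v, v⟫_𝕜 := by
  have hzero : ∀ i, ¬t < μ i → b.repr v i = 0 := fun i hi => repr_eq_zero_of_mem_span_image hv hi
  obtain ⟨j, hj⟩ : ∃ j, b.repr v j ≠ 0 := by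
    by_contra! h
    exact hv0 (b.repr.injective (by ext j; simp [h j]))
  rw [re_inner_apply_self_eq_sum hb, b.norm_sq_eq_sum_repr, Finset.mul_sum]
  refine Finset.sum_lt_sum (fun i _ => ?_) ⟨j, mem_univ j, ?_⟩
  · by_cases hi : t < μ i
    · exact mul_le_mul_of_nonneg_right hi.le (by positivity)
    · simp [hzero i hi]
  · have hjt : t < μ j := by_contra fun h => hj (hzero j h)
    exact mul_lt_mul_of_pos_right hjt (by positivity)

theorem finrank_le_card_of_lt_re_inner {F : Type*} [AddCommGroup F] [Module 𝕜 F]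
    (hb : ∀ i, T (b i) = (μ i : 𝕜) • b i) (f : F →ₗ[𝕜] E) (W : Submodule 𝕜 F)
    (hW : ∀ w ∈ W, w ≠ 0 → t * ‖f w‖ ^ 2 < RCLike.re ⟪T (f w), f w⟫_𝕜) :
    finrank 𝕜 W ≤ #{i | t < μ i} := by
  let g : W →ₗ[𝕜] ({i // t < μ i} → 𝕜) :=
    { toFun := fun w i => b.repr (f w) i
      map_add' := by intros; ext; simp
      map_smul' := by intros; ext; simp }
  have hg : Function.Injective g := by
    rw [← LinearMap.ker_eq_bot, LinearMap.ker_eq_bot']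
    intro w hw
    by_contra hw0
    have hle := re_inner_apply_self_le_of_repr_eq_zero hb (v := f w) fun i hi => congrFun hw ⟨i, hi⟩
    exact (hW w w.2 (by simpa using hw0)).not_ge hle
  simpa [Fintype.card_subtype] using LinearMap.finrank_le_finrank_of_injective hg

theorem span_image_le_range (hb : ∀ i, T (b i) = (μ i : 𝕜) • b i) (ht : 0 ≤ t) :
    span 𝕜 (b '' {i | t < μ i}) ≤ LinearMap.range T := by
  rw [span_le]
  rintro _ ⟨i, hi, rfl⟩
  have hμ : (μ i : 𝕜) ≠ 0 := by exact_mod_cast (ht.trans_lt hi).ne'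
  exact ⟨(μ i : 𝕜)⁻¹ • b i, by rw [map_smul, hb, smul_smul, inv_mul_cancel₀ hμ, one_smul]⟩

end OrthonormalBasis

section Compression

variable {𝕜 E ι κ : Type*} [RCLike 𝕜] [NormedAddCommGroup E] [InnerProductSpace 𝕜 E]
  [Fintype ι] [Fintype κ] {A C P X : E →ₗ[𝕜] E} {a : OrthonormalBasis ι 𝕜 E}
  {c : OrthonormalBasis κ 𝕜 E} {μ : ι → ℝ} {ν : κ → ℝ} {α β lam : ℝ}

theorem card_gt_le_card_gt_sub_of_compression (ha : ∀ i, A (a i) = (μ i : 𝕜) • a i)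
    (hc : ∀ k, C (c k) = (ν k : 𝕜) • c k) (hsum : ∀ u, P u + X u = u)
    (horth : ∀ u, ⟪P u, X u⟫_𝕜 = 0) (hCX : ∀ u, ⟪C (X u), X u⟫_𝕜 = ⟪C u, u⟫_𝕜)
    (hdiff : ∀ u, |RCLike.re ⟪A u, u⟫_𝕜 - RCLike.re ⟪C u, u⟫_𝕜| ≤
      α * ‖P u‖ ^ 2 + β * ‖X u‖ ^ 2)
    (hlam : α ≤ lam) :
    #{i | lam < μ i} ≤ #{k | lam - β < ν k} := by
  rw [← a.finrank_span_image_setOf]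
  refine c.finrank_le_card_of_lt_re_inner hc X _ fun w hw hw0 => ?_
  have hA := a.lt_re_inner_apply_self_of_mem_span ha hw hw0
  have hnorm : ‖w‖ ^ 2 = ‖P w‖ ^ 2 + ‖X w‖ ^ 2 := by
    simpa [hsum, horth] using @norm_add_sq 𝕜 _ _ _ _ (P w) (X w)
  rw [hnorm] at hA
  rw [hCX]
  nlinarith [(abs_le.mp (hdiff w)).2, mul_nonneg (sub_nonneg.2 hlam) (sq_nonneg ‖P w‖)]

theorem card_gt_add_le_card_gt_of_compression (ha : ∀ i, A (a i) = (μ i : 𝕜) • a i)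
    (hc : ∀ k, C (c k) = (ν k : 𝕜) • c k) (hsum : ∀ u, P u + X u = u)
    (hXC : ∀ u, X (C u) = C u)
    (hdiff : ∀ u, |RCLike.re ⟪A u, u⟫_𝕜 - RCLike.re ⟪C u, u⟫_𝕜| ≤
      α * ‖P u‖ ^ 2 + β * ‖X u‖ ^ 2)
    (hlam : 0 ≤ lam + β) :
    #{k | lam + β < ν k} ≤ #{i | lam < μ i} := by
  rw [← c.finrank_span_image_setOf]
  refine a.finrank_le_card_of_lt_re_inner ha LinearMap.id _ fun w hw hw0 => ?_
  have hC := c.lt_re_inner_apply_self_of_mem_span hc hw hw0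
  obtain ⟨v, rfl⟩ := c.span_image_le_range hc hlam hw
  have hP : P (C v) = 0 := by simpa [hXC v] using hsum (C v)
  have hd := (abs_le.mp (hdiff (C v))).1
  rw [hP, hXC] at hd
  simp only [LinearMap.id_apply, norm_zero] at hd ⊢
  linarith

end Compression

namespace Matrix

variable {𝕜 n : Type*} [RCLike 𝕜] [Fintype n] [DecidableEq n]

theorem IsHermitian.toEuclideanCLM_apply_eigenvectorBasis {M : Matrix n n 𝕜}
    (hM : M.IsHermitian) (j : n) :
    toEuclideanCLM (𝕜 := 𝕜) M (hM.eigenvectorBasis j) =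
      (hM.eigenvalues j : 𝕜) • hM.eigenvectorBasis j := by
  apply WithLp.ofLp_injective
  rw [ofLp_toEuclideanCLM, hM.mulVec_eigenvectorBasis, WithLp.ofLp_smul,
    RCLike.real_smul_eq_coe_smul (K := 𝕜)]

theorem IsHermitian.inner_toEuclideanCLM_left {M : Matrix n n 𝕜} (hM : M.IsHermitian)
    (x y : EuclideanSpace 𝕜 n) :
    ⟪toEuclideanCLM (𝕜 := 𝕜) M x, y⟫_𝕜 = ⟪x, toEuclideanCLM (𝕜 := 𝕜) M y⟫_𝕜 :=
  isSymmetric_toEuclideanLin_iff.mpr hM x y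

theorem toEuclideanCLM_mul_apply (M N : Matrix n n 𝕜) (u : EuclideanSpace 𝕜 n) :
    toEuclideanCLM (𝕜 := 𝕜) (M * N) u =
      toEuclideanCLM (𝕜 := 𝕜) M (toEuclideanCLM (𝕜 := 𝕜) N u) := by
  rw [map_mul]
  rfl

end Matrix

theorem counting_cross_term_general {n : ℕ} (B Pr Xi : Matrix (Fin n) (Fin n) ℂ)
    (hB : B.IsHermitian) (hPr : Pr.IsHermitian) (hXi : Xi.IsHermitian)
    (hXi2 : Xi * Xi = Xi)
    (hsum : Pr + Xi = 1) (horth : Pr * Xi = 0)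
    (hXBX : (Xi * B * Xi).IsHermitian)
    (α β lam : ℝ) (hα : 0 ≤ α) (hβ : 0 ≤ β) (hlam : α < lam)
    (hquad : ∀ u : EuclideanSpace ℂ (Fin n),
      ‖(inner ℂ ((Matrix.toEuclideanCLM (𝕜 := ℂ) (B - Xi * B * Xi)) u) u : ℂ)‖ ≤
        α * ‖(Matrix.toEuclideanCLM (𝕜 := ℂ) Pr) u‖ ^ 2 +
          β * ‖(Matrix.toEuclideanCLM (𝕜 := ℂ) Xi) u‖ ^ 2) :
    countAbove hB lam ≤ countAbove hXBX (lam - β) ∧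
    countAbove hXBX (lam + β) ≤ countAbove hB lam := by
  have hB' := hB.toEuclideanCLM_apply_eigenvectorBasis
  have hXBX' := hXBX.toEuclideanCLM_apply_eigenvectorBasis
  have hsum' (u) : toEuclideanCLM (𝕜 := ℂ) Pr u + toEuclideanCLM (𝕜 := ℂ) Xi u = u := by
    simpa using congr(toEuclideanCLM (𝕜 := ℂ) $hsum u)
  have horth' (u) : ⟪toEuclideanCLM (𝕜 := ℂ) Pr u, toEuclideanCLM (𝕜 := ℂ) Xi u⟫_ℂ = 0 := by
    rw [hPr.inner_toEuclideanCLM_left, ← toEuclideanCLM_mul_apply, horth]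
    simp
  have hXC (u) : toEuclideanCLM (𝕜 := ℂ) Xi (toEuclideanCLM (𝕜 := ℂ) (Xi * B * Xi) u) =
      toEuclideanCLM (𝕜 := ℂ) (Xi * B * Xi) u := by
    rw [← toEuclideanCLM_mul_apply, ← mul_assoc, ← mul_assoc, hXi2]
  have hCX (u) : ⟪toEuclideanCLM (𝕜 := ℂ) (Xi * B * Xi) (toEuclideanCLM (𝕜 := ℂ) Xi u),
      toEuclideanCLM (𝕜 := ℂ) Xi u⟫_ℂ = ⟪toEuclideanCLM (𝕜 := ℂ) (Xi * B * Xi) u, u⟫_ℂ := by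
    rw [← toEuclideanCLM_mul_apply, mul_assoc, hXi2, ← hXi.inner_toEuclideanCLM_left, hXC]
  have hdiff (u) : |RCLike.re ⟪toEuclideanCLM (𝕜 := ℂ) B u, u⟫_ℂ -
      RCLike.re ⟪toEuclideanCLM (𝕜 := ℂ) (Xi * B * Xi) u, u⟫_ℂ| ≤
      α * ‖toEuclideanCLM (𝕜 := ℂ) Pr u‖ ^ 2 + β * ‖toEuclideanCLM (𝕜 := ℂ) Xi u‖ ^ 2 := by
    simpa [inner_sub_left] using (RCLike.abs_re_le_norm _).trans (hquad u)
  exact ⟨card_gt_le_card_gt_sub_of_compression hB' hXBX' hsum' horth' hCX hdiff hlam.le,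
    card_gt_add_le_card_gt_of_compression hB' hXBX' hsum' hXC hdiff (by linarith)⟩

/-- If `B = ΞBΞ + D` with `|⟨Du,u⟩| ≤ α‖Πu‖² + β‖Ξu‖²` for all `u`, and `α < λ`, then
`n₊(λ, B) ≤ n₊(λ - β, ΞBΞ)` and `n₊(λ + β, ΞBΞ) ≤ n₊(λ, B)`. -/
theorem counting_cross_term {n : ℕ} (B Pr Xi : Matrix (Fin n) (Fin n) ℂ)
    (hB : B.IsHermitian) (hPr : Pr.IsHermitian) (hXi : Xi.IsHermitian)
    (hPr2 : Pr * Pr = Pr) (hXi2 : Xi * Xi = Xi)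
    (hsum : Pr + Xi = 1) (horth : Pr * Xi = 0)
    (hXBX : (Xi * B * Xi).IsHermitian)
    (α β lam : ℝ) (hα : 0 ≤ α) (hβ : 0 ≤ β) (hlam : α < lam)
    (hquad : ∀ u : EuclideanSpace ℂ (Fin n),
      ‖(inner ℂ ((Matrix.toEuclideanCLM (𝕜 := ℂ) (B - Xi * B * Xi)) u) u : ℂ)‖ ≤
        α * ‖(Matrix.toEuclideanCLM (𝕜 := ℂ) Pr) u‖ ^ 2 +
          β * ‖(Matrix.toEuclideanCLM (𝕜 := ℂ) Xi) u‖ ^ 2) :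
    countAbove hB lam ≤ countAbove hXBX (lam - β) ∧
    countAbove hXBX (lam + β) ≤ countAbove hB lam :=
  counting_cross_term_general B Pr Xi hB hPr hXi hXi2 hsum horth hXBX α β lam hα hβ hlam hquad
end

section
/- For integers 1 ≤ r ≤ k−1 and k ≤ l ≤ n (with k = ⌈n/2⌉), Σ_{m ≤ 0} 1/((r−m)(m−l)²) ≤ C(1 + log n)/n² and Σ_{m ≥ n+1} 1/((m−r)²(m−l)) ≤ C(1 + log n)/n², for an absolute constant C. -/
open Real Finset

lemma key_summable (a b : ℕ) (ha : 1 ≤ a) (hb : 1 ≤ b) :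
    Summable (fun j : ℕ => 1 / (((a:ℝ) + j) * ((b:ℝ) + j) ^ 2)) := by
  have h : Summable (fun j : ℕ => 1 / ((j:ℝ) + 1) ^ 2) := by
    have := (summable_nat_add_iff 1).2 (Real.summable_one_div_nat_pow.2 one_lt_two)
    refine this.congr fun j => by push_cast; ring
  refine Summable.of_nonneg_of_le (fun j => by positivity) (fun j => ?_) h
  have h1 : (1:ℝ) ≤ (a:ℝ) + j := by
    have : (1:ℝ) ≤ (a:ℝ) := by exact_mod_cast ha
    linarith [Nat.cast_nonneg (α := ℝ) j]
  have h2 : ((j:ℝ) + 1) ^ 2 ≤ ((b:ℝ) + j) ^ 2 := by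
    have : (1:ℝ) ≤ (b:ℝ) := by exact_mod_cast hb
    nlinarith [Nat.cast_nonneg (α := ℝ) j]
  rw [div_le_div_iff₀ (by positivity) (by positivity)]
  nlinarith [Nat.cast_nonneg (α := ℝ) j, sq_nonneg ((j:ℝ)+1)]

lemma key (a b : ℕ) (ha : 1 ≤ a) (hb : 1 ≤ b) :
    ∑' j : ℕ, 1 / (((a:ℝ) + j) * ((b:ℝ) + j) ^ 2) ≤ (2 + Real.log b) / b ^ 2 := by
  have hb0 : (0:ℝ) < b := by exact_mod_cast hb
  have hsum := key_summable a b ha hb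
  set f : ℕ → ℝ := fun j => 1 / (((a:ℝ) + j) * ((b:ℝ) + j) ^ 2) with hf
  rw [← Summable.sum_add_tsum_nat_add b hsum]
  have part1 : ∑ j ∈ range b, f j ≤ (1 + Real.log b) / b ^ 2 := by
    have step : ∀ j ∈ range b, f j ≤ 1 / ((j:ℝ) + 1) * (1 / b ^ 2) := by
      intro j _
      have h1 : ((j:ℝ) + 1) ≤ (a:ℝ) + j := by
        have : (1:ℝ) ≤ (a:ℝ) := by exact_mod_cast ha
        linarith
      have h2 : ((b:ℝ)) ^ 2 ≤ ((b:ℝ) + j) ^ 2 := by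
        nlinarith [Nat.cast_nonneg (α := ℝ) j]
      rw [hf]
      simp only
      rw [div_mul_div_comm, one_mul, div_le_div_iff₀ (by positivity) (by positivity)]
      nlinarith [Nat.cast_nonneg (α := ℝ) j]
    calc ∑ j ∈ range b, f j ≤ ∑ j ∈ range b, 1 / ((j:ℝ) + 1) * (1 / b ^ 2) :=
          Finset.sum_le_sum step
      _ = (harmonic b : ℝ) * (1 / b ^ 2) := by
          rw [← Finset.sum_mul]; congr 1
          rw [harmonic]; push_cast
          exact Finset.sum_congr rfl fun x _ => by ring
      _ ≤ (1 + Real.log b) * (1 / b ^ 2) := by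
          gcongr; exact harmonic_le_one_add_log b
      _ = (1 + Real.log b) / b ^ 2 := by ring
  have part2 : ∑' j : ℕ, f (j + b) ≤ 1 / b ^ 2 := by
    have htel : ∑' j : ℕ, (1 / ((b:ℝ) + j) - 1 / ((b:ℝ) + j + 1)) ≤ 1 / b := by
      apply Real.tsum_le_of_sum_range_le
      · intro j
        have : (0:ℝ) < (b:ℝ) + j := by positivity
        have h2 : (b:ℝ) + j ≤ (b:ℝ) + j + 1 := by linarith
        have := one_div_le_one_div_of_le this h2
        linarith
      · intro N
        have hkey := Finset.sum_range_sub' (fun j : ℕ => 1 / ((b:ℝ) + j)) N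
        have heq : ∑ j ∈ range N, (1 / ((b:ℝ) + j) - 1 / ((b:ℝ) + j + 1))
            = 1 / ((b:ℝ) + (0:ℕ)) - 1 / ((b:ℝ) + N) := by
          rw [← hkey]
          exact Finset.sum_congr rfl fun j _ => by push_cast; ring
        rw [heq]
        have hp : (0:ℝ) < (b:ℝ) + N := by positivity
        have := one_div_pos.2 hp
        push_cast
        simp only [add_zero]
        linarith
    have hbound : ∀ j : ℕ, f (j + b) ≤ (1 / b) * (1 / ((b:ℝ) + j) - 1 / ((b:ℝ) + j + 1)) := by
      intro j
      have hid : (1 / ((b:ℝ) + j) - 1 / ((b:ℝ) + j + 1)) = 1 / (((b:ℝ) + j) * ((b:ℝ) + j + 1)) := by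
        rw [div_sub_div _ _ (by positivity) (by positivity)]
        ring_nf
      rw [hid, hf]
      simp only
      push_cast
      rw [div_mul_div_comm, one_mul, div_le_div_iff₀ (by positivity) (by positivity)]
      have ha1 : (1:ℝ) ≤ (a:ℝ) := by exact_mod_cast ha
      have hb1 : (1:ℝ) ≤ (b:ℝ) := by exact_mod_cast hb
      have hj : (0:ℝ) ≤ (j:ℝ) := Nat.cast_nonneg j
      nlinarith [sq_nonneg ((b:ℝ)+j)]
    have hsum2 : Summable (fun j : ℕ => f (j + b)) := (summable_nat_add_iff b).2 hsum
    have hsumtel : Summable (fun j : ℕ => (1 / b : ℝ) * (1 / ((b:ℝ) + j) - 1 / ((b:ℝ) + j + 1))) := by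
      apply Summable.mul_left
      have h : Summable (fun j : ℕ => 1 / (((b:ℝ) + j) * ((b:ℝ) + j + 1))) := by
        have base : Summable (fun j : ℕ => 1 / ((j:ℝ) + 1) ^ 2) := by
          have := (summable_nat_add_iff 1).2 (Real.summable_one_div_nat_pow.2 one_lt_two)
          refine this.congr fun j => by push_cast; ring
        refine Summable.of_nonneg_of_le (fun j => by positivity) (fun j => ?_) base
        rw [div_le_div_iff₀ (by positivity) (by positivity)]
        have hb1 : (1:ℝ) ≤ (b:ℝ) := by exact_mod_cast hb
        have hj : (0:ℝ) ≤ (j:ℝ) := Nat.cast_nonneg j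
        nlinarith
      refine h.congr fun j => ?_
      rw [div_sub_div _ _ (by positivity) (by positivity)]
      ring_nf
    calc ∑' j : ℕ, f (j + b) ≤ ∑' j : ℕ, (1 / b : ℝ) * (1 / ((b:ℝ) + j) - 1 / ((b:ℝ) + j + 1)) :=
          Summable.tsum_le_tsum hbound hsum2 hsumtel
      _ = (1 / b : ℝ) * ∑' j : ℕ, (1 / ((b:ℝ) + j) - 1 / ((b:ℝ) + j + 1)) := tsum_mul_left
      _ ≤ (1 / b : ℝ) * (1 / b) :=
          mul_le_mul_of_nonneg_left htel (by positivity)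
      _ = 1 / b ^ 2 := by ring
  calc ∑ j ∈ range b, f j + ∑' j : ℕ, f (j + b)
      ≤ (1 + Real.log b) / b ^ 2 + 1 / b ^ 2 := add_le_add part1 part2
    _ = (2 + Real.log b) / b ^ 2 := by ring

lemma bound_chain (b n : ℕ) (hb : 1 ≤ b) (hbn : b ≤ n) (h2 : n ≤ 2 * b) (hn : 1 ≤ n) :
    (2 + Real.log b) / b ^ 2 ≤ 8 * (1 + Real.log n) / n ^ 2 := by
  have hb0 : (0:ℝ) < b := by exact_mod_cast hb
  have hn0 : (0:ℝ) < n := by exact_mod_cast hn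
  have hlog : Real.log b ≤ Real.log n := by
    apply Real.log_le_log hb0; exact_mod_cast hbn
  have hlogn : (0:ℝ) ≤ Real.log n := Real.log_nonneg (by exact_mod_cast hn)
  have hcast : (n:ℝ) ≤ 2 * b := by exact_mod_cast h2
  have hlogb0 : (0:ℝ) ≤ Real.log b := Real.log_nonneg (by exact_mod_cast hb)
  rw [div_le_div_iff₀ (by positivity) (by positivity)]
  have hn2 : (n:ℝ)^2 ≤ 4*(b:ℝ)^2 := by nlinarith
  calc (2 + Real.log b) * (n:ℝ)^2 ≤ (2*(1+Real.log n)) * (4*(b:ℝ)^2) :=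
        mul_le_mul (by linarith) hn2 (by positivity) (by linarith)
    _ = 8 * (1 + Real.log n) * (b:ℝ)^2 := by ring

/-- For `k = ⌈n/2⌉`, `1 ≤ r ≤ k-1`, `k ≤ l ≤ n`, both tail sums
`Σ_{m ≤ 0} 1/((r-m)(m-l)²)` and `Σ_{m ≥ n+1} 1/((m-r)²(m-l))` are bounded by
`C(1 + log n)/n²` with an absolute constant `C`. -/
theorem case3_tail_sums :
    ∃ C : ℝ, 0 < C ∧ ∀ n k r l : ℕ, 2 ≤ n → k = (n + 1) / 2 →
      1 ≤ r → r < k → k ≤ l → l ≤ n →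
      (∑' j : ℕ, 1 / (((r : ℝ) + j) * ((l : ℝ) + j) ^ 2) ≤
          C * (1 + Real.log n) / n ^ 2) ∧
      (∑' j : ℕ, 1 / (((n : ℝ) + 1 + j - r) ^ 2 * ((n : ℝ) + 1 + j - l)) ≤
          C * (1 + Real.log n) / n ^ 2) := by
  refine ⟨8, by norm_num, ?_⟩
  intro n k r l hn hk hr hrk hkl hln
  have hl1 : 1 ≤ l := by omega
  have hl2n : n ≤ 2 * l := by omega
  constructor
  · calc ∑' j : ℕ, 1 / (((r : ℝ) + j) * ((l : ℝ) + j) ^ 2)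
        ≤ (2 + Real.log l) / l ^ 2 := key r l hr hl1
      _ ≤ 8 * (1 + Real.log n) / n ^ 2 := bound_chain l n hl1 hln hl2n (by omega)
  · set A : ℕ := n + 1 - r with hA
    set B : ℕ := n + 1 - l with hB
    have hAr : (A:ℝ) = (n:ℝ) + 1 - r := by
      rw [hA, Nat.cast_sub (by omega)]; push_cast; ring
    have hBr : (B:ℝ) = (n:ℝ) + 1 - l := by
      rw [hB, Nat.cast_sub (by omega)]; push_cast; ring
    have heq : ∀ j : ℕ, 1 / (((n : ℝ) + 1 + j - r) ^ 2 * ((n : ℝ) + 1 + j - l))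
        = 1 / (((B:ℝ) + j) * ((A:ℝ) + j) ^ 2) := by
      intro j; rw [hAr, hBr]; ring_nf
    rw [tsum_congr heq]
    have hB1 : 1 ≤ B := by omega
    have hA1 : 1 ≤ A := by omega
    have hAn : A ≤ n := by omega
    have hA2n : n ≤ 2 * A := by omega
    calc ∑' j : ℕ, 1 / (((B:ℝ) + j) * ((A:ℝ) + j) ^ 2)
        ≤ (2 + Real.log A) / A ^ 2 := key B A hB1 hA1
      _ ≤ 8 * (1 + Real.log n) / n ^ 2 := bound_chain A n hA1 hAn hA2n (by omega)
end
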